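/- arXiv:1902.01070 — 6 statements merged into one kernel-verified Lean document; each statement's English description precedes it below -/
import Mathlib

section
/- If a probability measure μ on ℝ^d belongs to M_ρ for some ρ > 0 (i.e., its two-sided Laplace transform u ↦ ∫ exp(uᵀx) dμ(x) is bounded by A·exp(B‖u‖^ρ) for some constants A, B > 0) and μ is not the Dirac mass at 0, then ρ ≥ 1. -/
/-!
Suppose `ρ < 1`. For a direction `u`, the moment generating function of `x ↦ ⟪u, x⟫` at
`t ≥ 0` is the Laplace transform at `t • u`, hence at most `A * exp (C * t ^ ρ)` with
`C = B * ‖u‖ ^ ρ`. The Chernoff bound then gives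
`μ {ε ≤ ⟪u, x⟫} ≤ A * exp (C * t ^ ρ - ε * t)`, which tends to `0` as `t → ∞` because
`t ^ ρ = o(t)`. So `⟪u, x⟫ ≤ 0` almost surely for every `u`; testing against `± bᵢ` for a
basis `b`, `x = 0` almost surely, i.e. `μ` is the Dirac mass at `0`.
-/

open MeasureTheory Real Filter ProbabilityTheory

theorem tendsto_mul_rpow_sub_mul_atBot {ρ : ℝ} (hρ : ρ < 1) (C : ℝ) {ε : ℝ}
    (hε : 0 < ε) :
    Tendsto (fun t : ℝ => C * t ^ ρ - ε * t) atTop atBot := by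
  have hlim : Tendsto (fun t : ℝ => C * t ^ (ρ - 1) - ε) atTop (nhds (C * 0 - ε)) := by
    have := tendsto_rpow_neg_atTop (by linarith : 0 < 1 - ρ)
    rw [neg_sub] at this
    exact (this.const_mul C).sub_const ε
  refine (tendsto_id.atTop_mul_neg (by simpa using hε) hlim).congr' ?_
  filter_upwards [eventually_gt_atTop 0] with t ht
  rw [id, rpow_sub_one ht.ne']
  field_simp

section Chernoff

variable {Ω : Type*} [MeasurableSpace Ω] {μ : Measure Ω} [IsFiniteMeasure μ] {X : Ω → ℝ}
  {A C ρ : ℝ}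

theorem measure_ge_eq_zero_of_mgf_le_rpow (hρ : ρ < 1)
    (hint : ∀ t, 0 ≤ t → Integrable (fun ω => exp (t * X ω)) μ)
    (hmgf : ∀ t, 0 ≤ t → mgf X μ t ≤ A * exp (C * t ^ ρ)) {ε : ℝ} (hε : 0 < ε) :
    μ {ω | ε ≤ X ω} = 0 := by
  have hchernoff : ∀ t, 0 ≤ t →
      μ.real {ω | ε ≤ X ω} ≤ A * exp (C * t ^ ρ - ε * t) := fun t ht =>
    calc μ.real {ω | ε ≤ X ω} ≤ exp (-t * ε) * mgf X μ t :=
          measure_ge_le_exp_mul_mgf ε ht (hint t ht)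
      _ ≤ exp (-t * ε) * (A * exp (C * t ^ ρ)) := by gcongr; exact hmgf t ht
      _ = A * exp (C * t ^ ρ - ε * t) := by rw [sub_eq_add_neg, exp_add]; ring_nf
  have hlim : Tendsto (fun t => A * exp (C * t ^ ρ - ε * t)) atTop (nhds 0) := by
    simpa using (tendsto_exp_atBot.comp (tendsto_mul_rpow_sub_mul_atBot hρ C hε)).const_mul A
  have hle : μ.real {ω | ε ≤ X ω} ≤ 0 :=
    ge_of_tendsto hlim (eventually_ge_atTop 0 |>.mono hchernoff)
  exact (measureReal_eq_zero_iff).1 (le_antisymm hle measureReal_nonneg)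

theorem ae_nonpos_of_mgf_le_rpow (hρ : ρ < 1)
    (hint : ∀ t, 0 ≤ t → Integrable (fun ω => exp (t * X ω)) μ)
    (hmgf : ∀ t, 0 ≤ t → mgf X μ t ≤ A * exp (C * t ^ ρ)) :
    ∀ᵐ ω ∂μ, X ω ≤ 0 := by
  have htail : ∀ n : ℕ, ∀ᵐ ω ∂μ, X ω < 1 / (n + 1) := fun n => by
    simpa [ae_iff] using measure_ge_eq_zero_of_mgf_le_rpow hρ hint hmgf Nat.one_div_pos_of_nat
  filter_upwards [ae_all_iff.2 htail] with ω hω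
  by_contra! hpos
  obtain ⟨n, hn⟩ := exists_nat_one_div_lt hpos
  exact (hω n).not_gt hn

end Chernoff

section InnerProductSpace

variable {E : Type*} [NormedAddCommGroup E] [InnerProductSpace ℝ E] [FiniteDimensional ℝ E]
  [MeasurableSpace E] {μ : Measure E}

theorem ae_eq_zero_of_forall_ae_inner_nonpos (h : ∀ u : E, ∀ᵐ x ∂μ, inner ℝ u x ≤ 0) :
    ∀ᵐ x ∂μ, x = 0 := by
  let b := Module.finBasis ℝ E
  have hb : ∀ i, ∀ᵐ x ∂μ, inner ℝ (b i) x ≤ 0 ∧ inner ℝ (-b i) x ≤ 0 := fun i =>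
    (h (b i)).and (h (-b i))
  filter_upwards [ae_all_iff.2 hb] with x hx
  refine InnerProductSpace.ext_inner_left_basis b fun i => ?_
  obtain ⟨hle, hge⟩ := hx i
  rw [inner_neg_left] at hge
  rw [inner_zero_right]
  linarith

end InnerProductSpace

theorem MeasureTheory.Measure.eq_dirac_of_ae_eq {α : Type*} [MeasurableSpace α] {μ : Measure α}
    [IsProbabilityMeasure μ] {a : α} (h : ∀ᵐ x ∂μ, x = a) : μ = Measure.dirac a :=
  calc μ = μ.map id := Measure.map_id.symm
    _ = μ.map (fun _ => a) := Measure.map_congr h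
    _ = Measure.dirac a := by simp [Measure.map_const]

theorem stmt0_general (d : ℕ) (μ : Measure (EuclideanSpace ℝ (Fin d))) [IsProbabilityMeasure μ]
    (ρ : ℝ)
    (hint : ∀ u : EuclideanSpace ℝ (Fin d),
      Integrable (fun x => Real.exp ((inner ℝ u x : ℝ))) μ)
    (hbound : ∃ A B : ℝ, 0 < A ∧ 0 < B ∧ ∀ u : EuclideanSpace ℝ (Fin d),
      (∫ x, Real.exp ((inner ℝ u x : ℝ)) ∂μ) ≤ A * Real.exp (B * ‖u‖ ^ ρ))
    (hμ : μ ≠ Measure.dirac 0) :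
    1 ≤ ρ := by
  by_contra! hρ
  obtain ⟨A, B, -, -, hlaplace⟩ := hbound
  refine hμ (Measure.eq_dirac_of_ae_eq (ae_eq_zero_of_forall_ae_inner_nonpos fun u => ?_))
  have hsmul : ∀ (t : ℝ) x, exp (t * inner ℝ u x) = exp (inner ℝ (t • u) x) := by
    simp [real_inner_smul_left]
  refine ae_nonpos_of_mgf_le_rpow (A := A) (C := B * ‖u‖ ^ ρ) hρ
    (fun t _ => by simpa only [hsmul] using hint (t • u)) fun t ht => ?_
  calc mgf (fun x => inner ℝ u x) μ t = ∫ x, exp (inner ℝ (t • u) x) ∂μ := by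
        simp only [mgf, hsmul]
    _ ≤ A * exp (B * ‖t • u‖ ^ ρ) := hlaplace _
    _ = A * exp (B * ‖u‖ ^ ρ * t ^ ρ) := by
      rw [norm_smul, norm_of_nonneg ht, mul_rpow ht (norm_nonneg u)]
      ring_nf

/-- If a probability measure `μ` on `ℝ^d` belongs to `M_ρ` for some `ρ > 0` (its two-sided
Laplace transform is everywhere defined and bounded by `A * exp (B * ‖u‖ ^ ρ)`) and `μ` is not
the Dirac mass at `0`, then `ρ ≥ 1`. -/
theorem stmt0 (d : ℕ) (μ : Measure (EuclideanSpace ℝ (Fin d))) [IsProbabilityMeasure μ]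
    (ρ : ℝ) (hρ : 0 < ρ)
    (hint : ∀ u : EuclideanSpace ℝ (Fin d),
      Integrable (fun x => Real.exp ((inner ℝ u x : ℝ))) μ)
    (hbound : ∃ A B : ℝ, 0 < A ∧ 0 < B ∧ ∀ u : EuclideanSpace ℝ (Fin d),
      (∫ x, Real.exp ((inner ℝ u x : ℝ)) ∂μ) ≤ A * Real.exp (B * ‖u‖ ^ ρ))
    (hμ : μ ≠ Measure.dirac 0) :
    1 ≤ ρ :=
  stmt0_general d μ ρ hint hbound hμ
end

section
/- Let μ be a probability measure on ℝ^d which is not the Dirac mass at 0, and suppose its Laplace transform L(u) = ∫ exp(uᵀx) dμ(x) is finite everywhere. Then there exist a ∈ ℝ^d, α > 0 and δ > 0 such that 0 ∉ ∏_{j=1}^d [a_j − α, a_j + α], μ(∏_j [a_j−α, a_j+α]) ≥ δ, and for all u ∈ ℝ^d, L(u) ≥ δ·exp(∑_{j=1}^d inf_{x_j ∈ [a_j−α, a_j+α]} u_j x_j). -/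
/-!
Since `μ ≠ δ₀`, the set `{0}ᶜ` has positive mass, so (by second countability) some point `x ≠ 0`
has all its neighbourhoods of positive mass; a cube around `x` of radius `|x j| / 2`, where
`x j ≠ 0`, avoids `0`. On any cube, `⟪u, x⟫ = ∑ j, u j * x j` is bounded below by the sum of the
coordinatewise infima, and Markov's inequality for `exp ⟪u, ·⟫` gives the bound with
`δ = μ (cube)`.
-/

open MeasureTheory Real Filter Topology Set

lemma measure_compl_singleton_ne_zero_of_ne_dirac {α : Type*} [MeasurableSpace α]
    [MeasurableSingletonClass α] {μ : Measure α} [IsProbabilityMeasure μ] {a : α}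
    (hμ : μ ≠ Measure.dirac a) : μ {a}ᶜ ≠ 0 := by
  intro h
  have h_one : μ {a} = 1 := (prob_compl_eq_zero_iff (measurableSet_singleton a)).1 h
  have h_ae : ∀ᵐ x ∂μ, x ∈ ({a} : Set α) := by rwa [ae_iff]
  refine hμ ?_
  rw [← Measure.restrict_eq_self_of_ae_mem h_ae, Measure.restrict_singleton, h_one, one_smul]

lemma measureReal_mul_le_integral_of_forall_le {α : Type*} [MeasurableSpace α] {μ : Measure α}
    [IsFiniteMeasure μ] {f : α → ℝ} (hf_nonneg : 0 ≤ᵐ[μ] f) (hf : Integrable f μ) {s : Set α}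
    {c : ℝ} (hc : 0 ≤ c) (hcs : ∀ x ∈ s, c ≤ f x) : μ.real s * c ≤ ∫ x, f x ∂μ := by
  rw [mul_comm]
  exact (mul_le_mul_of_nonneg_left (measureReal_mono hcs) hc).trans
    (mul_meas_ge_le_integral_of_nonneg hf_nonneg hf c)

section Cube

variable {ι : Type*} [Fintype ι]

def cube (a : ι → ℝ) (r : ℝ) : Set (EuclideanSpace ℝ ι) :=
  {x | ∀ j, x j ∈ Icc (a j - r) (a j + r)}

lemma cube_mem_nhds {x : EuclideanSpace ℝ ι} {r : ℝ} (hr : 0 < r) :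
    cube (fun j => x j) r ∈ 𝓝 x :=
  eventually_all.2 fun j =>
    (EuclideanSpace.proj j : EuclideanSpace ℝ ι →L[ℝ] ℝ).continuous.continuousAt.eventually
      (Icc_mem_nhds (by simp [hr]) (by simp [hr]))

lemma sum_iInf_mul_le_inner {a : ι → ℝ} {r : ℝ} {x : EuclideanSpace ℝ ι} (hx : x ∈ cube a r)
    (u : EuclideanSpace ℝ ι) :
    ∑ j, ⨅ y : Icc (a j - r) (a j + r), u j * (y : ℝ) ≤ inner ℝ u x := by
  have h_inner : inner ℝ u x = ∑ j, u j * x j := by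
    simp [PiLp.inner_apply, mul_comm]
  rw [h_inner]
  refine Finset.sum_le_sum fun j _ => ciInf_le ?_ (⟨x j, hx j⟩ : Icc (a j - r) (a j + r))
  rw [← image_eq_range]
  exact (isCompact_Icc.image (continuous_const_mul (u j))).bddBelow

lemma exists_cube_zero_notMem_measure_ne_zero {μ : Measure (EuclideanSpace ℝ ι)}
    (hμ : μ {0}ᶜ ≠ 0) :
    ∃ (a : ι → ℝ) (r : ℝ), 0 < r ∧ (0 : EuclideanSpace ℝ ι) ∉ cube a r ∧ μ (cube a r) ≠ 0 := by
  obtain ⟨x, hx, h_pos⟩ := exists_mem_forall_mem_nhdsWithin_pos_measure hμ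
  obtain ⟨j, hj⟩ : ∃ j, x j ≠ 0 := by
    by_contra! h
    exact hx (PiLp.ext h)
  have hr : 0 < |x j| / 2 := by positivity
  refine ⟨fun j => x j, |x j| / 2, hr, fun h_zero => ?_,
    (h_pos _ (mem_nhdsWithin_of_mem_nhds (cube_mem_nhds hr))).ne'⟩
  have h_zero_j := h_zero j
  simp only [PiLp.zero_apply, mem_Icc] at h_zero_j
  cases abs_cases (x j) <;> linarith [h_zero_j.1, h_zero_j.2]

end Cube

/-- If `μ` is a probability measure on `ℝ^d`, not the Dirac mass at `0`, with everywhere-finite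
Laplace transform, then there is a box `∏ [a_j − α, a_j + α]` not containing `0`, of `μ`-measure
at least `δ > 0`, and the Laplace transform is bounded below by
`δ * exp (∑_j inf_{x_j ∈ [a_j−α, a_j+α]} u_j x_j)` for every `u`. -/
theorem stmt4 (d : ℕ) (μ : Measure (EuclideanSpace ℝ (Fin d))) [IsProbabilityMeasure μ]
    (hμ : μ ≠ Measure.dirac 0)
    (hint : ∀ u : EuclideanSpace ℝ (Fin d),
      Integrable (fun x => Real.exp ((inner ℝ u x : ℝ))) μ) :
    ∃ (a : Fin d → ℝ) (α δ : ℝ), 0 < α ∧ 0 < δ ∧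
      (0 : EuclideanSpace ℝ (Fin d)) ∉
        {x : EuclideanSpace ℝ (Fin d) | ∀ j, x j ∈ Set.Icc (a j - α) (a j + α)} ∧
      ENNReal.ofReal δ ≤
        μ {x : EuclideanSpace ℝ (Fin d) | ∀ j, x j ∈ Set.Icc (a j - α) (a j + α)} ∧
      ∀ u : EuclideanSpace ℝ (Fin d),
        δ * Real.exp (∑ j, ⨅ x : Set.Icc (a j - α) (a j + α), u j * (x : ℝ)) ≤
          ∫ x, Real.exp ((inner ℝ u x : ℝ)) ∂μ := by
  obtain ⟨a, r, hr, h_zero, h_ne⟩ :=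
    exists_cube_zero_notMem_measure_ne_zero (measure_compl_singleton_ne_zero_of_ne_dirac hμ)
  refine ⟨a, r, μ.real (cube a r), hr, ENNReal.toReal_pos h_ne (measure_ne_top _ _), h_zero,
    (ofReal_measureReal (measure_ne_top _ _)).le, fun u => ?_⟩
  exact measureReal_mul_le_integral_of_forall_le (ae_of_all _ fun x => (exp_pos _).le) (hint u)
    (exp_pos _).le fun x hx => exp_le_exp.2 (sum_iInf_mul_le_inner hx u)
end

section
/- Let F: ℂ^d → ℂ be a function such that for each i ∈ {1,…,d}, there exist functions a_i, b_i: ℂ^{d−1} → ℂ with F(u) = a_i(u^{(−i)})·u_i + b_i(u^{(−i)}) for all u, where u^{(−i)} denotes u with the i-th coordinate removed. Then F is a polynomial in u₁,…,u_d of degree at most 1 in each variable. -/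
namespace Stmt5Aux

variable {d : ℕ}

/-- The point obtained from `u` by replacing coordinates in `s` by the indicator of `R`. -/
def pt (s R : Finset (Fin d)) (u : Fin d → ℂ) : Fin d → ℂ :=
  fun j => if j ∈ s then (if j ∈ R then 1 else 0) else u j

/-- The iterated difference coefficient. -/
noncomputable def D (F : (Fin d → ℂ) → ℂ) (s T : Finset (Fin d)) (u : Fin d → ℂ) : ℂ :=
  ∑ R ∈ T.powerset, (-1 : ℂ) ^ ((T \ R).card) * F (pt s R u)

lemma pt_zero (s R : Finset (Fin d)) (i : Fin d) (hi : i ∉ s) (hiR : i ∉ R) (u : Fin d → ℂ) :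
    pt (insert i s) R u = pt s R (Function.update u i 0) := by
  funext j
  by_cases hji : j = i
  · subst hji; simp [pt, hi, hiR]
  · simp [pt, Finset.mem_insert, hji, Function.update_of_ne hji]

lemma pt_one (s R : Finset (Fin d)) (i : Fin d) (hi : i ∉ s) (hiR : i ∉ R) (u : Fin d → ℂ) :
    pt (insert i s) (insert i R) u = pt s R (Function.update u i 1) := by
  funext j
  by_cases hji : j = i
  · subst hji; simp [pt, hi]
  · simp [pt, Finset.mem_insert, hji, Function.update_of_ne hji]

lemma D_insert (F : (Fin d → ℂ) → ℂ) (s T : Finset (Fin d)) (i : Fin d)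
    (hi : i ∉ s) (hT : T ⊆ s) :
    D F (insert i s) (insert i T) u =
      D F s T (Function.update u i 1) - D F s T (Function.update u i 0) := by
  have hiT : i ∉ T := fun h => hi (hT h)
  unfold D
  rw [Finset.sum_powerset_insert hiT]
  have h1 : ∀ R ∈ T.powerset,
      (-1 : ℂ) ^ ((insert i T \ R).card) * F (pt (insert i s) R u)
        = -((-1 : ℂ) ^ ((T \ R).card) * F (pt s R (Function.update u i 0))) := by
    intro R hR
    rw [Finset.mem_powerset] at hR
    have hiR : i ∉ R := fun h => hiT (hR h)
    have hset : insert i T \ R = insert i (T \ R) := by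
      rw [Finset.insert_sdiff_of_notMem _ hiR]
    have hcard : (insert i T \ R).card = (T \ R).card + 1 := by
      rw [hset, Finset.card_insert_of_notMem (fun h => hiT (Finset.mem_sdiff.mp h).1)]
    rw [hcard, pt_zero s R i hi hiR u, pow_succ]
    ring
  have h2 : ∀ R ∈ T.powerset,
      (-1 : ℂ) ^ ((insert i T \ insert i R).card) * F (pt (insert i s) (insert i R) u)
        = (-1 : ℂ) ^ ((T \ R).card) * F (pt s R (Function.update u i 1)) := by
    intro R hR
    rw [Finset.mem_powerset] at hR
    have hiR : i ∉ R := fun h => hiT (hR h)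
    have hset : insert i T \ insert i R = T \ R := by
      ext x
      simp only [Finset.mem_sdiff, Finset.mem_insert]
      constructor
      · rintro ⟨hx1 | hx1, hx2⟩
        · exact absurd (Or.inl hx1) hx2
        · exact ⟨hx1, fun h => hx2 (Or.inr h)⟩
      · rintro ⟨hx1, hx2⟩
        exact ⟨Or.inr hx1, by rintro (rfl | h); exacts [hiT hx1, hx2 h]⟩
    rw [hset, pt_one s R i hi hiR u]
  rw [Finset.sum_congr rfl h1, Finset.sum_congr rfl h2, Finset.sum_neg_distrib]
  ring

lemma D_notmem (F : (Fin d → ℂ) → ℂ) (s T : Finset (Fin d)) (i : Fin d)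
    (hi : i ∉ s) (hT : T ⊆ s) (u : Fin d → ℂ) :
    D F (insert i s) T u = D F s T (Function.update u i 0) := by
  unfold D
  refine Finset.sum_congr rfl fun R hR => ?_
  rw [Finset.mem_powerset] at hR
  have hiR : i ∉ R := fun h => hi (hT (hR h))
  rw [pt_zero s R i hi hiR u]

lemma key (F : (Fin d → ℂ) → ℂ)
    (hF : ∀ (i : Fin d) (u : Fin d → ℂ),
      F u = F (Function.update u i 0)
        + (F (Function.update u i 1) - F (Function.update u i 0)) * u i)
    (s : Finset (Fin d)) :
    ∀ u : Fin d → ℂ, F u = ∑ T ∈ s.powerset, (∏ j ∈ T, u j) * D F s T u := by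
  induction s using Finset.induction_on with
  | empty =>
      intro u
      have h : pt (∅ : Finset (Fin d)) ∅ u = u := by funext j; simp [pt]
      simp [D, h]
  | @insert i s hi ih =>
      intro u
      rw [Finset.sum_powerset_insert hi]
      have hprod : ∀ (v : ℂ), ∀ T ∈ s.powerset,
          (∏ j ∈ T, Function.update u i v j) = ∏ j ∈ T, u j := by
        intro v T hT
        rw [Finset.mem_powerset] at hT
        exact Finset.prod_congr rfl fun j hj =>
          Function.update_of_ne (by rintro rfl; exact hi (hT hj)) _ _
      have e0 := ih (Function.update u i 0)
      have e1 := ih (Function.update u i 1)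
      replace e0 : F (Function.update u i 0)
          = ∑ T ∈ s.powerset, (∏ j ∈ T, u j) * D F s T (Function.update u i 0) := by
        rw [e0]; exact Finset.sum_congr rfl fun T hT => by rw [hprod 0 T hT]
      replace e1 : F (Function.update u i 1)
          = ∑ T ∈ s.powerset, (∏ j ∈ T, u j) * D F s T (Function.update u i 1) := by
        rw [e1]; exact Finset.sum_congr rfl fun T hT => by rw [hprod 1 T hT]
      have hL : ∑ T ∈ s.powerset, (∏ j ∈ T, u j) * D F (insert i s) T u
          = ∑ T ∈ s.powerset, (∏ j ∈ T, u j) * D F s T (Function.update u i 0) := by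
        refine Finset.sum_congr rfl fun T hT => ?_
        rw [Finset.mem_powerset] at hT
        rw [D_notmem F s T i hi hT u]
      have hR : ∑ T ∈ s.powerset, (∏ j ∈ insert i T, u j) * D F (insert i s) (insert i T) u
          = ∑ T ∈ s.powerset, (u i * ∏ j ∈ T, u j) *
              (D F s T (Function.update u i 1) - D F s T (Function.update u i 0)) := by
        refine Finset.sum_congr rfl fun T hT => ?_
        rw [Finset.mem_powerset] at hT
        have hiT : i ∉ T := fun h => hi (hT h)
        rw [Finset.prod_insert hiT, D_insert F s T i hi hT]
      rw [hL, hR, hF i u, e0, e1, sub_mul, Finset.sum_mul, Finset.sum_mul,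
        ← Finset.sum_sub_distrib]
      congr 1
      exact Finset.sum_congr rfl fun T _ => by ring

end Stmt5Aux

/-- If `F : ℂ^d → ℂ` is, for every index `i`, of the form
`F u = a_i (u^{(−i)}) * u_i + b_i (u^{(−i)})` (affine in the `i`-th variable with coefficients
depending only on the other variables), then `F` is a polynomial of degree at most `1` in each
variable, i.e. `F u = ∑_{S ⊆ {1,…,d}} c_S ∏_{i ∈ S} u_i`. -/
theorem stmt5 (d : ℕ) (F : (Fin d → ℂ) → ℂ)
    (haffine : ∀ i : Fin d, ∃ a b : ({j : Fin d // j ≠ i} → ℂ) → ℂ,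
      ∀ u : Fin d → ℂ,
        F u = a (fun j => u j.1) * u i + b (fun j => u j.1)) :
    ∃ c : Finset (Fin d) → ℂ, ∀ u : Fin d → ℂ,
      F u = ∑ S : Finset (Fin d), c S * ∏ i ∈ S, u i := by
  have hF : ∀ (i : Fin d) (u : Fin d → ℂ),
      F u = F (Function.update u i 0)
        + (F (Function.update u i 1) - F (Function.update u i 0)) * u i := by
    intro i u
    obtain ⟨a, b, h⟩ := haffine i
    have hv : ∀ (v : ℂ),
        (fun j : {j : Fin d // j ≠ i} => Function.update u i v j.1)
          = fun j : {j : Fin d // j ≠ i} => u j.1 :=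
      fun v => funext fun j => Function.update_of_ne j.2 _ _
    rw [h u, h (Function.update u i 0), h (Function.update u i 1), hv 0, hv 1,
      Function.update_self, Function.update_self]
    ring
  refine ⟨fun S => Stmt5Aux.D F Finset.univ S 0, fun u => ?_⟩
  have := Stmt5Aux.key F hF Finset.univ u
  rw [this, Finset.powerset_univ]
  refine Finset.sum_congr rfl fun S _ => ?_
  have hD : Stmt5Aux.D F Finset.univ S u = Stmt5Aux.D F Finset.univ S 0 := by
    unfold Stmt5Aux.D
    refine Finset.sum_congr rfl fun R _ => ?_
    have hpt : Stmt5Aux.pt Finset.univ R u = Stmt5Aux.pt Finset.univ R 0 := by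
      funext j; simp [Stmt5Aux.pt]
    rw [hpt]
  rw [hD, mul_comm]
end

section
/- Let F: ℂ^d × ℂ^d → ℂ be analytic on the whole space. If F vanishes on a set of the form {(it₁, it₂) : (t₁, t₂) ∈ V} where V is an open neighborhood of 0 in ℝ^d × ℝ^d, then F is identically zero on ℂ^d × ℂ^d. -/
open Complex Filter

/-- Key lemma: an entire function on `ℂ^n` vanishing on a real box around `0` vanishes. -/
lemma key (n : ℕ) (g : (Fin n → ℂ) → ℂ) (hg : AnalyticOnNhd ℂ g Set.univ)
    (ε : ℝ) (hε : 0 < ε)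
    (h : ∀ x : Fin n → ℝ, (∀ i, |x i| < ε) → g (fun i => (x i : ℂ)) = 0) :
    ∀ z, g z = 0 := by
  -- P k : vanishing when all coordinates with index ≥ k are real and small
  have P : ∀ k : ℕ, ∀ z : Fin n → ℂ,
      (∀ i : Fin n, k ≤ (i : ℕ) → ∃ r : ℝ, |r| < ε ∧ z i = (r : ℂ)) → g z = 0 := by
    intro k
    induction k with
    | zero =>
      intro z hz
      choose x hx1 hx2 using fun i => hz i (Nat.zero_le _)
      have : z = fun i => ((x i : ℝ) : ℂ) := funext fun i => hx2 i
      rw [this]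
      exact h x hx1
    | succ k ih =>
      intro z hz
      by_cases hk : k < n
      · set j : Fin n := ⟨k, hk⟩ with hj
        set c : Fin n → ℂ := fun i => if i = j then 0 else z i with hc
        set s : Fin n → ℂ := Pi.single j 1 with hs
        have hupd : ∀ w : ℂ, Function.update z j w = c + w • s := by
          intro w
          funext i
          by_cases hij : i = j
          · subst hij
            simp [hc, hs, Pi.single_eq_same]
          · simp [Function.update_of_ne hij, hc, hs, hij, Pi.single_eq_of_ne hij]
        set φ : ℂ → ℂ := fun w => g (c + w • s) with hφ
        have hφa : AnalyticOnNhd ℂ φ Set.univ := by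
          apply hg.comp _ (Set.mapsTo_univ _ _)
          exact analyticOnNhd_const.add ((analyticOnNhd_id).smul analyticOnNhd_const)
        have hφ0 : ∀ w : ℝ, |w| < ε → φ ((w : ℝ) : ℂ) = 0 := by
          intro w hw
          have := ih (Function.update z j ((w : ℝ) : ℂ)) ?_
          · rwa [hupd] at this
          · intro i hi
            by_cases hij : i = j
            · subst hij
              exact ⟨w, hw, by simp⟩
            · have : k + 1 ≤ (i : ℕ) := by
                rcases Nat.lt_or_ge (i : ℕ) (k + 1) with h' | h'
                · exfalso
                  apply hij
                  have : (i : ℕ) = k := le_antisymm (Nat.lt_succ_iff.mp h') hi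
                  exact Fin.ext this
                · exact h'
              obtain ⟨r, hr1, hr2⟩ := hz i this
              exact ⟨r, hr1, by rw [Function.update_of_ne hij]; exact hr2⟩
        -- zeros frequently near 0
        have hfreq : ∃ᶠ w in nhdsWithin (0 : ℂ) {(0:ℂ)}ᶜ, φ w = 0 := by
          have htend : Tendsto (fun m : ℕ => (((ε / (m + 2) : ℝ)) : ℂ)) atTop
              (nhdsWithin (0 : ℂ) {(0:ℂ)}ᶜ) := by
            apply tendsto_nhdsWithin_of_tendsto_nhds_of_eventually_within
            · have : Tendsto (fun m : ℕ => (ε / (m + 2) : ℝ)) atTop (nhds 0) := by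
                apply Tendsto.div_atTop (tendsto_const_nhds)
                exact tendsto_atTop_add_const_right atTop 2 tendsto_natCast_atTop_atTop
              have := (Complex.continuous_ofReal.tendsto 0).comp this
              simpa only [Function.comp_def, Complex.ofReal_zero] using this
            · filter_upwards with m
              simp only [Set.mem_compl_iff, Set.mem_singleton_iff]
              intro hcon
              have h2 : (ε / (m + 2) : ℝ) = 0 := by exact_mod_cast hcon
              have h3 : ((m : ℝ) + 2) ≠ 0 := by positivity
              rw [div_eq_zero_iff] at h2
              rcases h2 with h2 | h2
              · linarith
              · exact h3 h2
          apply htend.frequently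
          apply Filter.Frequently.of_forall
          intro m
          apply hφ0
          rw [abs_of_pos (by positivity)]
          rw [div_lt_iff₀ (by positivity)]
          nlinarith
        have := hφa.eqOn_zero_of_preconnected_of_frequently_eq_zero
          isPreconnected_univ (Set.mem_univ 0) hfreq
        have hzj := this (Set.mem_univ (z j))
        have : g z = 0 := by
          have h1 : c + z j • s = z := by rw [← hupd, Function.update_eq_self]
          simpa [hφ, h1] using hzj
        exact this
      · apply ih
        intro i hi
        exact absurd (lt_of_le_of_lt hi i.isLt) (by omega)
  intro z
  exact P n z (fun i hi => absurd (lt_of_le_of_lt hi i.isLt) (lt_irrefl n))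

/-- If `F : ℂ^d × ℂ^d → ℂ` is analytic on the whole space and vanishes on the purely imaginary
points `(i t₁, i t₂)` for `(t₁, t₂)` in an open real neighborhood of `0`, then `F ≡ 0`. -/
theorem stmt6 (d : ℕ) (F : (Fin d → ℂ) × (Fin d → ℂ) → ℂ)
    (hF : AnalyticOnNhd ℂ F Set.univ)
    (V : Set ((Fin d → ℝ) × (Fin d → ℝ))) (hV : IsOpen V) (h0 : (0, 0) ∈ V)
    (hvanish : ∀ t ∈ V,
      F (fun i => Complex.I * (t.1 i : ℂ), fun i => Complex.I * (t.2 i : ℂ)) = 0) :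
    ∀ z : (Fin d → ℂ) × (Fin d → ℂ), F z = 0 := by
  obtain ⟨ε, hε, hball⟩ := Metric.isOpen_iff.mp hV _ h0
  -- the continuous linear map
  set L : (Fin (d + d) → ℂ) →L[ℂ] (Fin d → ℂ) × (Fin d → ℂ) :=
    (ContinuousLinearMap.pi fun i => Complex.I • ContinuousLinearMap.proj (Fin.castAdd d i)).prod
    (ContinuousLinearMap.pi fun i => Complex.I • ContinuousLinearMap.proj (Fin.natAdd d i)) with hL
  have hLapp : ∀ x : Fin (d + d) → ℂ,
      L x = (fun i => Complex.I * x (Fin.castAdd d i), fun i => Complex.I * x (Fin.natAdd d i)) := by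
    intro x
    rfl
  set G : (Fin (d + d) → ℂ) → ℂ := fun x => F (L x) with hG
  have hGa : AnalyticOnNhd ℂ G Set.univ :=
    hF.comp (L.analyticOnNhd Set.univ) (Set.mapsTo_univ _ _)
  have hG0 : ∀ x : Fin (d + d) → ℝ, (∀ i, |x i| < ε) → G (fun i => (x i : ℂ)) = 0 := by
    intro x hx
    set t : (Fin d → ℝ) × (Fin d → ℝ) :=
      (fun i => x (Fin.castAdd d i), fun i => x (Fin.natAdd d i)) with ht
    have htV : t ∈ V := by
      apply hball
      rw [Metric.mem_ball, Prod.dist_eq]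
      rw [max_lt_iff]
      constructor <;> rw [dist_pi_lt_iff hε] <;> intro i <;>
        simpa [Real.dist_eq] using hx _
    exact hvanish t htV
  have hkey := key (d + d) G hGa ε hε hG0
  intro z
  set u : Fin d → ℂ := fun i => -Complex.I * z.1 i with hu
  set v : Fin d → ℂ := fun i => -Complex.I * z.2 i with hv
  have h2 : F (fun i => Complex.I * Fin.append u v (Fin.castAdd d i),
      fun i => Complex.I * Fin.append u v (Fin.natAdd d i)) = 0 := hkey (Fin.append u v)
  convert h2 using 3
  · funext i
    rw [Fin.append_left, hu]
    simp only []
    ring_nf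
    simp [Complex.I_sq]
  · funext i
    rw [Fin.append_right, hv]
    simp only []
    ring_nf
    simp [Complex.I_sq]
end

section
/- Let Λ be a compact metric space, C ≥ 2, and (K_n) a sequence of transition kernels on Λ converging uniformly (in W₁) to a kernel K, such that for each n there exists a probability measure λ_n with 1/C ≤ dK_n(x,·)/dλ_n ≤ C for all x ∈ Λ. Then there exists a probability measure λ such that K(x,·) is absolutely continuous with respect to λ with density taking values in [1/C, C] for all x ∈ Λ; i.e., the Doeblin-type class Ω_ω^C is closed. -/
/-!
Along a subsequence the reference measures `λ_n` converge weakly to some `λ`: the space of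
probability measures on a compact metric space is compact and metrizable. On a separable space
weak convergence is convergence in the Lévy–Prokhorov metric, and the kernels `K_n(x,·)` converge
to `K(x,·)` in that metric too, by Markov's inequality on a near-optimal `W₁` coupling. A
Lévy–Prokhorov bound `d(μ_n, μ) < ε` compares `μ` on a set with `μ_n` on its `ε`-thickening, so
each of the bounds `λ_n ≤ C K_n(x,·)` and `K_n(x,·) ≤ C λ_n` passes to the limit on closed sets,
whose thickenings shrink back to them, and then to all measurable sets by inner regularity.
-/

open MeasureTheory Filter

/-- The Wasserstein-1 distance between two measures, defined through couplings. -/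
noncomputable def W1 {α : Type*} [MeasurableSpace α] [PseudoMetricSpace α]
    (μ ν : Measure α) : ℝ :=
  sInf {c | ∃ π : Measure (α × α),
    π.map Prod.fst = μ ∧ π.map Prod.snd = ν ∧ c = ∫ p, dist p.1 p.2 ∂π}

open Metric Set
open scoped ENNReal Topology

section Coupling

variable {Ω : Type*} [PseudoMetricSpace Ω] [MeasurableSpace Ω]

def couplingCosts (μ ν : Measure Ω) : Set ℝ :=
  {c | ∃ π : Measure (Ω × Ω),
    π.map Prod.fst = μ ∧ π.map Prod.snd = ν ∧ c = ∫ p, dist p.1 p.2 ∂π}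

theorem W1_eq_sInf_couplingCosts (μ ν : Measure Ω) : W1 μ ν = sInf (couplingCosts μ ν) := rfl

theorem bddBelow_couplingCosts (μ ν : Measure Ω) : BddBelow (couplingCosts μ ν) :=
  ⟨0, by rintro _ ⟨π, -, -, rfl⟩; exact integral_nonneg fun p => dist_nonneg⟩

theorem integral_dist_prod_mem_couplingCosts (μ ν : Measure Ω) [IsProbabilityMeasure μ]
    [IsProbabilityMeasure ν] : ∫ p, dist p.1 p.2 ∂(μ.prod ν) ∈ couplingCosts μ ν :=
  ⟨μ.prod ν, by simp [Measure.map_fst_prod], by simp [Measure.map_snd_prod], rfl⟩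

variable [SecondCountableTopology Ω] [OpensMeasurableSpace Ω]

theorem measure_preimage_le_measure_preimage_thickening_add {π : Measure (Ω × Ω)} {ε : ℝ}
    (hε : 0 < ε) (hπ : ∫⁻ p, edist p.1 p.2 ∂π < ENNReal.ofReal ε * ENNReal.ofReal ε)
    (B : Set Ω) :
    π (Prod.fst ⁻¹' B) ≤ π (Prod.snd ⁻¹' thickening ε B) + ENNReal.ofReal ε ∧
      π (Prod.snd ⁻¹' B) ≤ π (Prod.fst ⁻¹' thickening ε B) + ENNReal.ofReal ε := by
  set far := {p : Ω × Ω | ENNReal.ofReal ε ≤ edist p.1 p.2}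
  have hfar : π far ≤ ENNReal.ofReal ε :=
    ((ENNReal.mul_lt_mul_iff_right (ENNReal.ofReal_pos.2 hε).ne' ENNReal.ofReal_ne_top).1
      ((mul_meas_ge_le_lintegral₀ continuous_edist.aemeasurable _).trans_lt hπ)).le
  have hnear : ∀ a b : Ω, a ∈ B → b ∈ thickening ε B ∨ ENNReal.ofReal ε ≤ edist a b := by
    intro a b ha
    by_contra! h
    rw [edist_dist, ENNReal.ofReal_lt_ofReal_iff hε] at h
    exact h.1 (mem_thickening_iff.2 ⟨a, ha, by rw [dist_comm]; exact h.2⟩)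
  constructor
  · calc π (Prod.fst ⁻¹' B) ≤ π (Prod.snd ⁻¹' thickening ε B ∪ far) :=
          measure_mono fun p hp => hnear p.1 p.2 hp
      _ ≤ _ := (measure_union_le _ _).trans (by gcongr)
  · calc π (Prod.snd ⁻¹' B) ≤ π (Prod.fst ⁻¹' thickening ε B ∪ far) :=
          measure_mono fun p hp => (hnear p.2 p.1 hp).imp id (by rw [edist_comm]; exact id)
      _ ≤ _ := (measure_union_le _ _).trans (by gcongr)

variable [BoundedSpace Ω]

theorem integrable_dist (π : Measure (Ω × Ω)) [IsFiniteMeasure π] :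
    Integrable (fun p : Ω × Ω => dist p.1 p.2) π :=
  Integrable.of_bound continuous_dist.aestronglyMeasurable (diam (univ : Set Ω))
    (Eventually.of_forall fun p => by
      rw [Real.norm_of_nonneg dist_nonneg]
      exact dist_le_diam_of_mem (Bornology.isBounded_univ.2 ‹_›) trivial trivial)

theorem W1_le_diam (μ ν : Measure Ω) [IsProbabilityMeasure μ] [IsProbabilityMeasure ν] :
    W1 μ ν ≤ diam (univ : Set Ω) := by
  rw [W1_eq_sInf_couplingCosts]
  refine csInf_le_of_le (bddBelow_couplingCosts μ ν)
    (integral_dist_prod_mem_couplingCosts μ ν) ?_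
  calc ∫ p, dist p.1 p.2 ∂(μ.prod ν) ≤ ∫ _, diam (univ : Set Ω) ∂(μ.prod ν) :=
        integral_mono (integrable_dist _) (integrable_const _) fun p =>
          dist_le_diam_of_mem (Bornology.isBounded_univ.2 ‹_›) trivial trivial
    _ = diam (univ : Set Ω) := by simp

theorem exists_coupling_lintegral_edist_lt_of_W1_lt {μ ν : Measure Ω} [IsProbabilityMeasure μ]
    [IsProbabilityMeasure ν] {c : ℝ} (h : W1 μ ν < c) :
    ∃ π : Measure (Ω × Ω), π.map Prod.fst = μ ∧ π.map Prod.snd = ν ∧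
      ∫⁻ p, edist p.1 p.2 ∂π < ENNReal.ofReal c := by
  rw [W1_eq_sInf_couplingCosts] at h
  obtain ⟨_, ⟨π, hfst, hsnd, rfl⟩, hlt⟩ := (csInf_lt_iff (bddBelow_couplingCosts μ ν)
    ⟨_, integral_dist_prod_mem_couplingCosts μ ν⟩).1 h
  have : IsFiniteMeasure π := ⟨by
    simpa [← hfst, Measure.map_apply measurable_fst MeasurableSet.univ] using
      measure_lt_top μ univ⟩
  refine ⟨π, hfst, hsnd, ?_⟩
  simp_rw [edist_dist]
  rwa [← ofReal_integral_eq_lintegral_ofReal (integrable_dist π)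
    (ae_of_all _ fun _ => dist_nonneg),
    ENNReal.ofReal_lt_ofReal_iff_of_nonneg (integral_nonneg fun _ => dist_nonneg)]


theorem levyProkhorovEDist_le_ofReal_of_W1_lt {μ ν : Measure Ω} [IsProbabilityMeasure μ]
    [IsProbabilityMeasure ν] {ε : ℝ} (hε : 0 < ε) (h : W1 μ ν < ε * ε) :
    levyProkhorovEDist μ ν ≤ ENNReal.ofReal ε := by
  obtain ⟨π, hfst, hsnd, hπ⟩ := exists_coupling_lintegral_edist_lt_of_W1_lt h
  rw [ENNReal.ofReal_mul hε.le] at hπ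
  refine sInf_le fun B hB => ?_
  rw [ENNReal.toReal_ofReal hε.le, ← hfst, ← hsnd,
    Measure.map_apply measurable_fst hB, Measure.map_apply measurable_snd hB,
    Measure.map_apply measurable_fst isOpen_thickening.measurableSet,
    Measure.map_apply measurable_snd isOpen_thickening.measurableSet]
  exact measure_preimage_le_measure_preimage_thickening_add hε hπ B

theorem levyProkhorovEDist_le_ofReal_sqrt_W1 (μ ν : Measure Ω) [IsProbabilityMeasure μ]
    [IsProbabilityMeasure ν] : levyProkhorovEDist μ ν ≤ ENNReal.ofReal √(W1 μ ν) := by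
  refine le_of_forall_gt_imp_ge_of_dense fun c hc => ?_
  by_cases hc_top : c = ⊤
  · exact hc_top ▸ le_top
  rw [← ENNReal.ofReal_toReal hc_top]
  have hlt : √(W1 μ ν) < c.toReal :=
    (ENNReal.ofReal_lt_iff_lt_toReal (Real.sqrt_nonneg _) hc_top).1 hc
  have hpos : 0 < c.toReal := (Real.sqrt_nonneg _).trans_lt hlt
  exact levyProkhorovEDist_le_ofReal_of_W1_lt hpos (by rw [← sq]; exact (Real.sqrt_lt' hpos).1 hlt)

theorem tendsto_levyProkhorovEDist_of_tendsto_iSup_W1 {ι : Type*} {μs : ℕ → ι → Measure Ω}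
    {μ : ι → Measure Ω} [∀ n i, IsProbabilityMeasure (μs n i)] [∀ i, IsProbabilityMeasure (μ i)]
    (h : Tendsto (fun n => ⨆ i, W1 (μs n i) (μ i)) atTop (𝓝 0)) (i : ι) :
    Tendsto (fun n => levyProkhorovEDist (μs n i) (μ i)) atTop (𝓝 0) := by
  have hbdd : ∀ n, BddAbove (range fun i => W1 (μs n i) (μ i)) := fun n =>
    ⟨diam (univ : Set Ω), by rintro _ ⟨i, rfl⟩; exact W1_le_diam _ _⟩
  have hsqrt : Tendsto (fun n => ENNReal.ofReal √(⨆ i, W1 (μs n i) (μ i))) atTop (𝓝 0) := by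
    simpa [Function.comp_def] using
      ((ENNReal.continuous_ofReal.comp Real.continuous_sqrt).tendsto 0).comp h
  exact tendsto_of_tendsto_of_tendsto_of_le_of_le tendsto_const_nhds hsqrt (fun _ => zero_le)
    fun n => (levyProkhorovEDist_le_ofReal_sqrt_W1 _ _).trans
      (ENNReal.ofReal_le_ofReal (Real.sqrt_le_sqrt (le_ciSup (hbdd n) i)))

end Coupling

section Domination

variable {Ω : Type*} [PseudoMetricSpace Ω] [MeasurableSpace Ω] [OpensMeasurableSpace Ω]

theorem tendsto_levyProkhorovEDist_of_tendsto [TopologicalSpace.SeparableSpace Ω]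
    {μs : ℕ → ProbabilityMeasure Ω} {μ : ProbabilityMeasure Ω} (h : Tendsto μs atTop (𝓝 μ)) :
    Tendsto (fun n => levyProkhorovEDist (μs n : Measure Ω) μ) atTop (𝓝 0) :=
  tendsto_iff_edist_tendsto_0.1
    ((LevyProkhorov.continuous_ofMeasure_probabilityMeasure.tendsto μ).comp h)

theorem measure_le_mul_of_tendsto_levyProkhorovEDist {μs νs : ℕ → Measure Ω}
    {μ ν : Measure Ω} [IsFiniteMeasure ν]
    (hμ : Tendsto (fun n => levyProkhorovEDist (μs n) μ) atTop (𝓝 0))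
    (hν : Tendsto (fun n => levyProkhorovEDist (νs n) ν) atTop (𝓝 0))
    {c : ℝ≥0∞} (hc : c ≠ ⊤) (h : ∀ n B, MeasurableSet B → μs n B ≤ c * νs n B)
    {F : Set Ω} (hF : IsClosed F) : μ F ≤ c * ν F := by
  have key : ∀ ε : ℝ, 0 < ε →
      μ F ≤ c * (ν (thickening (ε + ε) F) + ENNReal.ofReal ε) + ENNReal.ofReal ε := by
    intro ε hε
    have hε' : (0 : ℝ≥0∞) < ENNReal.ofReal ε := ENNReal.ofReal_pos.2 hε
    obtain ⟨n, hμn, hνn⟩ :=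
      ((hμ.eventually (gt_mem_nhds hε')).and (hν.eventually (gt_mem_nhds hε'))).exists
    have hF' := right_measure_le_of_levyProkhorovEDist_lt hμn hF.measurableSet
    have hthick := left_measure_le_of_levyProkhorovEDist_lt hνn
      (isOpen_thickening (δ := ε) (E := F)).measurableSet
    rw [ENNReal.toReal_ofReal hε.le] at hF' hthick
    calc μ F ≤ μs n (thickening ε F) + ENNReal.ofReal ε := hF'
      _ ≤ c * νs n (thickening ε F) + ENNReal.ofReal ε := by
          gcongr; exact h n _ isOpen_thickening.measurableSet
      _ ≤ c * (ν (thickening ε (thickening ε F)) + ENNReal.ofReal ε) + ENNReal.ofReal ε := by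
          gcongr
      _ ≤ c * (ν (thickening (ε + ε) F) + ENNReal.ofReal ε) + ENNReal.ofReal ε := by
          gcongr; exact thickening_thickening_subset ε ε F
  have hdouble : Tendsto (fun ε : ℝ => ε + ε) (𝓝[>] 0) (𝓝[>] 0) := by
    refine tendsto_nhdsWithin_iff.2 ⟨?_, eventually_nhdsWithin_of_forall fun ε hε =>
      add_pos (mem_Ioi.1 hε) (mem_Ioi.1 hε)⟩
    simpa using ((tendsto_id (x := 𝓝 (0 : ℝ))).add tendsto_id).mono_left nhdsWithin_le_nhds
  have hofReal : Tendsto ENNReal.ofReal (𝓝[>] 0) (𝓝 0) := by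
    simpa using (ENNReal.continuous_ofReal.tendsto 0).mono_left nhdsWithin_le_nhds
  have hthick := (tendsto_measure_thickening_of_isClosed
    ⟨1, one_pos, measure_ne_top ν _⟩ hF).comp hdouble
  have hlim : Tendsto
      (fun ε => c * (ν (thickening (ε + ε) F) + ENNReal.ofReal ε) + ENNReal.ofReal ε)
      (𝓝[>] 0) (𝓝 (c * ν F)) := by
    simpa using (ENNReal.Tendsto.const_mul (hthick.add hofReal) (Or.inr hc)).add hofReal
  exact ge_of_tendsto hlim (eventually_nhdsWithin_of_forall key)

end Domination

theorem measure_le_mul_of_forall_isClosed {X : Type*} [TopologicalSpace X] [MeasurableSpace X]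
    {μ ν : Measure X} [IsFiniteMeasure μ] [μ.WeaklyRegular] {c : ℝ≥0∞}
    (h : ∀ F, IsClosed F → μ F ≤ c * ν F) {E : Set X} (hE : MeasurableSet E) :
    μ E ≤ c * ν E := by
  rw [hE.measure_eq_iSup_isClosed_of_ne_top (measure_ne_top μ E)]
  exact iSup₂_le fun F hFE => iSup_le fun hF => (h F hF).trans (by gcongr)

theorem stmt14_general (Λ : Type*) [MetricSpace Λ] [CompactSpace Λ]
    [MeasurableSpace Λ] [BorelSpace Λ]
    (C : ℝ)
    (K : ℕ → Λ → Measure Λ) (Klim : Λ → Measure Λ)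
    (hKprob : ∀ n x, IsProbabilityMeasure (K n x))
    (hKlimprob : ∀ x, IsProbabilityMeasure (Klim x))
    (lam : ℕ → Measure Λ) (hlamprob : ∀ n, IsProbabilityMeasure (lam n))
    (hdens : ∀ n (x : Λ) (E : Set Λ), MeasurableSet E →
      lam n E / ENNReal.ofReal C ≤ K n x E ∧ K n x E ≤ ENNReal.ofReal C * lam n E)
    (hconv : Tendsto (fun n => ⨆ x : Λ, W1 (K n x) (Klim x)) atTop (nhds 0)) :
    ∃ lam0 : Measure Λ, IsProbabilityMeasure lam0 ∧
      ∀ (x : Λ) (E : Set Λ), MeasurableSet E →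
        lam0 E / ENNReal.ofReal C ≤ Klim x E ∧ Klim x E ≤ ENNReal.ofReal C * lam0 E := by
  have hdiv : ∀ (μ : Measure Λ) [IsFiniteMeasure μ] (B : Set Λ) (a : ℝ≥0∞),
      a / ENNReal.ofReal C ≤ μ B ↔ a ≤ ENNReal.ofReal C * μ B := fun μ _ B a => by
    rw [ENNReal.div_le_iff_le_mul (Or.inr (measure_ne_top μ B)) (Or.inl ENNReal.ofReal_ne_top),
      mul_comm]
  obtain ⟨ν, φ, hφ, hlim⟩ := CompactSpace.tendsto_subseq (X := ProbabilityMeasure Λ)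
    fun n => ⟨lam n, hlamprob n⟩
  have hlamLP := tendsto_levyProkhorovEDist_of_tendsto hlim
  have hKLP := fun x => (tendsto_levyProkhorovEDist_of_tendsto_iSup_W1 hconv x).comp
    hφ.tendsto_atTop
  refine ⟨ν, inferInstance, fun x E hE => ⟨(hdiv _ E _).2 ?_, ?_⟩⟩
  · exact measure_le_mul_of_forall_isClosed (fun F hF =>
      measure_le_mul_of_tendsto_levyProkhorovEDist hlamLP (hKLP x) ENNReal.ofReal_ne_top
        (fun n B hB => (hdiv _ B _).1 (hdens (φ n) x B hB).1) hF) hE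
  · exact measure_le_mul_of_forall_isClosed (fun F hF =>
      measure_le_mul_of_tendsto_levyProkhorovEDist (hKLP x) hlamLP ENNReal.ofReal_ne_top
        (fun n B hB => (hdens (φ n) x B hB).2) hF) hE

/-- The Doeblin-type class `Ω_ω^C` is closed: if kernels `K_n` converge uniformly (in `W₁`) to
`K` and each `K_n` has a density in `[1/C, C]` with respect to some probability measure `λ_n`,
then `K` has a density in `[1/C, C]` with respect to some probability measure `λ`, in the sense
that `λ(E)/C ≤ K(x,E) ≤ C λ(E)` for all measurable `E`. -/
theorem stmt14 (Λ : Type*) [MetricSpace Λ] [CompactSpace Λ]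
    [MeasurableSpace Λ] [BorelSpace Λ]
    (C : ℝ) (hC : 2 ≤ C)
    (K : ℕ → Λ → Measure Λ) (Klim : Λ → Measure Λ)
    (hKprob : ∀ n x, IsProbabilityMeasure (K n x))
    (hKlimprob : ∀ x, IsProbabilityMeasure (Klim x))
    (lam : ℕ → Measure Λ) (hlamprob : ∀ n, IsProbabilityMeasure (lam n))
    (hdens : ∀ n (x : Λ) (E : Set Λ), MeasurableSet E →
      lam n E / ENNReal.ofReal C ≤ K n x E ∧ K n x E ≤ ENNReal.ofReal C * lam n E)
    (hconv : Tendsto (fun n => ⨆ x : Λ, W1 (K n x) (Klim x)) atTop (nhds 0)) :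
    ∃ lam0 : Measure Λ, IsProbabilityMeasure lam0 ∧
      ∀ (x : Λ) (E : Set Λ), MeasurableSet E →
        lam0 E / ENNReal.ofReal C ≤ Klim x E ∧ Klim x E ≤ ENNReal.ofReal C * lam0 E :=
  stmt14_general Λ C K Klim hKprob hKlimprob lam hlamprob hdens hconv
end

section
/- Let (Y_t)_{t∈ℤ} be a stationary process and suppose its finite-dimensional conditional distributions satisfy a uniform mixing (φ-mixing) bound: for all events A in σ(Y₁,…,Y_m) with positive probability and all k, d_TV(law of (Y_{m+l+1},…,Y_{m+l+k}) given A, law of (Y_{m+l+1},…,Y_{m+l+k})) ≤ 2(1 − 1/C)^l. Then for all probability measures P, Q arising as laws of two such processes and all k, m, l: E[d_TV²(conditional laws given Y₁^m under P and Q of the block shifted by l)] ≥ d_TV²(marginal k-block laws of P and Q)/2 − 32(1−1/C)^{2l}, using the elementary inequality (a−b)² ≥ a²/2 − b² for all real a, b. -/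
open MeasureTheory

/-- Total variation distance between two measures. -/
noncomputable def tvDist {E : Type*} [MeasurableSpace E] (μ ν : Measure E) : ℝ :=
  sSup {r | ∃ s : Set E, MeasurableSet s ∧ r = |(μ s).toReal - (ν s).toReal|}

lemma tv_set_nonempty {E : Type*} [MeasurableSpace E] (μ ν : Measure E) :
    {r | ∃ s : Set E, MeasurableSet s ∧ r = |(μ s).toReal - (ν s).toReal|}.Nonempty :=
  ⟨_, ∅, MeasurableSet.empty, rfl⟩

lemma tv_bddAbove {E : Type*} [MeasurableSpace E] (μ ν : Measure E)
    [IsProbabilityMeasure μ] [IsProbabilityMeasure ν] :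
    BddAbove {r | ∃ s : Set E, MeasurableSet s ∧ r = |(μ s).toReal - (ν s).toReal|} := by
  refine ⟨1, fun r hr => ?_⟩
  obtain ⟨s, hs, rfl⟩ := hr
  have h1 : (μ s).toReal ≤ 1 := by
    have := prob_le_one (μ := μ) (s := s)
    simpa using ENNReal.toReal_mono (by simp) this
  have h2 : (ν s).toReal ≤ 1 := by
    have := prob_le_one (μ := ν) (s := s)
    simpa using ENNReal.toReal_mono (by simp) this
  have h3 : (0:ℝ) ≤ (μ s).toReal := ENNReal.toReal_nonneg
  have h4 : (0:ℝ) ≤ (ν s).toReal := ENNReal.toReal_nonneg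
  rw [abs_sub_le_iff]; constructor <;> linarith

lemma tv_nonneg {E : Type*} [MeasurableSpace E] (μ ν : Measure E)
    [IsProbabilityMeasure μ] [IsProbabilityMeasure ν] : 0 ≤ tvDist μ ν := by
  have := le_csSup (tv_bddAbove μ ν) (show (0:ℝ) ∈ _ from ⟨∅, MeasurableSet.empty, by simp⟩)
  simpa [tvDist] using this

lemma tv_comm {E : Type*} [MeasurableSpace E] (μ ν : Measure E) :
    tvDist μ ν = tvDist ν μ := by
  unfold tvDist
  congr 1
  ext r
  constructor <;> rintro ⟨s, hs, rfl⟩ <;> exact ⟨s, hs, (abs_sub_comm _ _)⟩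

lemma tv_triangle {E : Type*} [MeasurableSpace E] (μ ν ρ : Measure E)
    [IsProbabilityMeasure μ] [IsProbabilityMeasure ν] [IsProbabilityMeasure ρ] :
    tvDist μ ν ≤ tvDist μ ρ + tvDist ρ ν := by
  apply csSup_le (tv_set_nonempty μ ν)
  rintro r ⟨s, hs, rfl⟩
  have h1 : |(μ s).toReal - (ρ s).toReal| ≤ tvDist μ ρ :=
    le_csSup (tv_bddAbove μ ρ) ⟨s, hs, rfl⟩
  have h2 : |(ρ s).toReal - (ν s).toReal| ≤ tvDist ρ ν :=
    le_csSup (tv_bddAbove ρ ν) ⟨s, hs, rfl⟩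
  calc |(μ s).toReal - (ν s).toReal|
      ≤ |(μ s).toReal - (ρ s).toReal| + |(ρ s).toReal - (ν s).toReal| := abs_sub_le _ _ _
    _ ≤ tvDist μ ρ + tvDist ρ ν := add_le_add h1 h2

/-- If random conditional laws `F ω` (resp. `G ω`) are uniformly within total variation
`2 (1 − 1/C)^l` of fixed laws `ν_F` (resp. `ν_G`), then (using `(a − b)² ≥ a²/2 − b²`)
`E[d_TV²(F, G)] ≥ d_TV²(ν_F, ν_G)/2 − 32 (1 − 1/C)^{2l}`. -/
theorem stmt17 (Ω E : Type*) [MeasurableSpace Ω] [MeasurableSpace E]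
    (P : Measure Ω) [IsProbabilityMeasure P]
    (F G : Ω → Measure E) (νF νG : Measure E)
    (hFprob : ∀ ω, IsProbabilityMeasure (F ω)) (hGprob : ∀ ω, IsProbabilityMeasure (G ω))
    (hνF : IsProbabilityMeasure νF) (hνG : IsProbabilityMeasure νG)
    (C : ℝ) (hC : 1 < C) (l : ℕ)
    (hFclose : ∀ ω, tvDist (F ω) νF ≤ 2 * (1 - 1 / C) ^ l)
    (hGclose : ∀ ω, tvDist (G ω) νG ≤ 2 * (1 - 1 / C) ^ l)
    (hint : Integrable (fun ω => tvDist (F ω) (G ω) ^ 2) P) :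
    (∀ a b : ℝ, a ^ 2 / 2 - b ^ 2 ≤ (a - b) ^ 2) ∧
    tvDist νF νG ^ 2 / 2 - 32 * (1 - 1 / C) ^ (2 * l) ≤
      ∫ ω, tvDist (F ω) (G ω) ^ 2 ∂P := by
  refine ⟨fun a b => by nlinarith [sq_nonneg (a - 2*b), sq_nonneg b], ?_⟩
  set a : ℝ := tvDist νF νG
  set ε : ℝ := 2 * (1 - 1 / C) ^ l
  have hεnn : 0 ≤ (1 - 1 / C) ^ l := by
    apply pow_nonneg
    have : 1 / C < 1 := by
      rw [div_lt_one (by linarith)]; linarith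
    linarith
  have hε : 0 ≤ ε := by positivity
  -- pointwise lower bound
  have key : ∀ ω, a ^ 2 / 2 - 32 * (1 - 1 / C) ^ (2 * l) ≤ tvDist (F ω) (G ω) ^ 2 := by
    intro ω
    haveI := hFprob ω
    haveI := hGprob ω
    have hnn : 0 ≤ tvDist (F ω) (G ω) := tv_nonneg _ _
    have htri : a ≤ tvDist (F ω) (G ω) + 2 * ε := by
      have t1 : tvDist νF νG ≤ tvDist νF (F ω) + tvDist (F ω) νG := tv_triangle _ _ _
      have t2 : tvDist (F ω) νG ≤ tvDist (F ω) (G ω) + tvDist (G ω) νG := tv_triangle _ _ _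
      have e1 : tvDist νF (F ω) = tvDist (F ω) νF := tv_comm _ _
      have := hFclose ω
      have := hGclose ω
      simp only [a, ε] at *
      linarith
    have hsq : (1 - 1 / C) ^ (2 * l) = ((1 - 1 / C) ^ l) ^ 2 := by
      rw [← pow_mul, mul_comm]
    rw [hsq]
    have hann : 0 ≤ a := tv_nonneg νF νG
    have hεdef : ε = 2 * (1 - 1 / C) ^ l := rfl
    by_cases h : a ≤ 2 * ε
    · nlinarith [sq_nonneg ((1 - 1 / C) ^ l), sq_nonneg a]
    · push_neg at h
      have : (a - 2 * ε) ^ 2 ≤ tvDist (F ω) (G ω) ^ 2 := by nlinarith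
      have h2 : a ^ 2 / 2 - (2 * ε) ^ 2 ≤ (a - 2 * ε) ^ 2 := by nlinarith [sq_nonneg (a - 4*ε)]
      simp only [ε] at *
      nlinarith
  calc a ^ 2 / 2 - 32 * (1 - 1 / C) ^ (2 * l)
      = ∫ _ω, (a ^ 2 / 2 - 32 * (1 - 1 / C) ^ (2 * l)) ∂P := by
        rw [integral_const]; simp
    _ ≤ ∫ ω, tvDist (F ω) (G ω) ^ 2 ∂P :=
        integral_mono (integrable_const _) hint key
end
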